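/- arXiv:1812.02491 — 4 statements merged into one kernel-verified Lean document; each statement's English description precedes it below -/
import Mathlib

section
/- Let (α₁,α₂,α₃) ∈ ℂ³ be strongly non-resonant and let a,b,c ∈ R have no common non-unit divisor (every d ∈ R dividing a, b and c is a unit). Assume the tangency condition α₁x₁a + α₂x₂b + α₃x₃c = 0 and the integrability condition a(∂₂c − ∂₃b) + b(∂₃a − ∂₁c) + c(∂₁b − ∂₂a) = 0. Then there exists a unit u ∈ R such that one of the following holds: (II) there are nonzero complex numbers b₁,b₂,b₃ with a = b₁·x₂x₃·u, b = b₂·x₁x₃·u, c = b₃·x₁x₂·u; or (I) exactly one of a,b,c is zero and, correspondingly, there are nonzero complex numbers b₁,b₂ with: c = 0, a = b₁·x₂·u, b = b₂·x₁·u; or b = 0, a = b₁·x₃·u, c = b₂·x₁·u; or a = 0, b = b₁·x₃·u, c = b₂·x₂·u. (Equivalently, up to a unit, ω = x₁x₂(b₁dx₁/x₁ + b₂dx₂/x₂) up to permutation of coordinates, or ω = x₁x₂x₃(b₁dx₁/x₁ + b₂dx₂/x₂ + b₃dx₃/x₃).) -/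
/-!
Write `ω = a dx₁ + b dx₂ + c dx₃` in the logarithmic frame: `(x₁a, x₂b, x₃c) = ∑ₙ tₙ xⁿ` with
`tₙ ∈ ℂ³`. Tangency says `α ⬝ tₙ = 0`, and the coefficient of `x^M` in `x₁x₂x₃ (ω ∧ dω)` is
`∑_{p+q=M} tₚ ⬝ (q × t_q)`. Let `n₀` be the lexicographically least exponent with `v = t_{n₀} ≠ 0`.
By induction along the lexicographic order every `tₙ` is a multiple of `v`: at `M = n₀ + n` only
the pairs `(n₀, n)` and `(n, n₀)` contribute, giving `(n - n₀) ⬝ (tₙ × v) = 0`, while `tₙ × v` is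
a multiple of `α`, both vectors being orthogonal to `α`; non-resonance gives `(n - n₀) ⬝ α ≠ 0`.
Hence `xᵢfᵢ = vᵢ U` for a single series `U`. As no `αᵢ` vanishes, at least two `vᵢ` are nonzero,
the corresponding `xᵢ` divide `U`, and coprimality makes the cofactor a unit.
-/

open MvPowerSeries

/-- A triple `(α₁, α₂, α₃) ∈ ℂ³` is strongly non-resonant if the only integers
`ℓ₁, ℓ₂, ℓ₃ ∈ ℤ` with `ℓ₁α₁ + ℓ₂α₂ + ℓ₃α₃ = 0` are `ℓ₁ = ℓ₂ = ℓ₃ = 0`. -/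
def StronglyNonResonant (α₁ α₂ α₃ : ℂ) : Prop :=
  ∀ l₁ l₂ l₃ : ℤ, (l₁ : ℂ) * α₁ + (l₂ : ℂ) * α₂ + (l₃ : ℂ) * α₃ = 0 →
    l₁ = 0 ∧ l₂ = 0 ∧ l₃ = 0

/-- Formal partial derivative `∂ᵢ` on multivariate formal power series. -/
noncomputable def pd {n : ℕ} (i : Fin n) (f : MvPowerSeries (Fin n) ℂ) :
    MvPowerSeries (Fin n) ℂ :=
  fun m => ((m i : ℂ) + 1) * MvPowerSeries.coeff (R := ℂ) (m + Finsupp.single i 1) f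

open Matrix Finset

namespace MvPowerSeries

variable {σ R : Type*}

theorem X_ne_zero [Semiring R] [Nontrivial R] (i : σ) : (X i : MvPowerSeries σ R) ≠ 0 :=
  nonZeroDivisors.ne_zero X_mem_nonzeroDivisors

theorem X_dvd_of_X_mul_eq_C_mul [Field R] {i : σ} {r : R} {φ U : MvPowerSeries σ R}
    (hr : r ≠ 0) (h : X i * φ = C r * U) : X i ∣ U :=
  (hr.isUnit.map C).dvd_mul_left.1 (h ▸ dvd_mul_right _ _)

theorem X_dvd_of_X_dvd_X_mul [Semiring R] {i j : σ} (hij : i ≠ j) {φ : MvPowerSeries σ R}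
    (h : X j ∣ X i * φ) : X j ∣ φ := by
  rw [X_dvd_iff] at h ⊢
  intro m hm
  have := h (Finsupp.single i 1 + m) (by simp [hij, hm])
  rwa [X_def, coeff_add_monomial_mul, one_mul] at this

variable [CommSemiring R]

theorem coeff_X_mul_pderiv (i : σ) (f : MvPowerSeries σ R) (n : σ →₀ ℕ) :
    coeff n (X i * pderiv R i f) = n i * coeff n f := by
  by_cases hn : n i = 0
  · rw [hn, Nat.cast_zero, zero_mul, X_dvd_iff.1 (dvd_mul_right _ _) n hn]
  obtain ⟨k, rfl⟩ : ∃ k, n = Finsupp.single i 1 + k :=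
    ⟨n - Finsupp.single i 1, (add_tsub_cancel_of_le (by simpa [Nat.one_le_iff_ne_zero])).symm⟩
  rw [X_def, coeff_add_monomial_mul, one_mul, coeff_pderiv, add_comm k]
  simp [add_comm (1 : R), mul_comm]

theorem pderiv_X_mul_of_ne {i j : σ} (h : j ≠ i) (f : MvPowerSeries σ R) :
    pderiv R i (X j * f) = X j * pderiv R i f := by
  simp [Derivation.leibniz, pderiv_X_of_ne h]

end MvPowerSeries

theorem pd_eq_pderiv {n : ℕ} (i : Fin n) (f : MvPowerSeries (Fin n) ℂ) : pd i f = pderiv ℂ i f := by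
  ext m
  rw [coeff_pderiv]
  exact mul_comm _ _

section CrossProduct

variable {K : Type*} [Field K] {u v w x : Fin 3 → K}

theorem exists_eq_smul_of_cross_eq_zero (hv : v ≠ 0) (h : x ⨯₃ v = 0) : ∃ c : K, x = c • v := by
  by_contra! hx
  have hind : LinearIndependent K ![v, x] :=
    (LinearIndependent.pair_iff' hv).2 fun c => (hx c).symm
  rw [← crossProduct_ne_zero_iff_linearIndependent, ← cross_anticomm, h, neg_zero] at hind
  exact hind rfl

/-- Here `u ⨯₃ (x ⨯₃ v) = (u ⬝ᵥ v) • x - (x ⬝ᵥ u) • v = 0`, so expanding a vector triple product,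
`(u ⬝ᵥ w) • (x ⨯₃ v) = (u ⨯₃ (x ⨯₃ v)) ⨯₃ w + (w ⬝ᵥ x ⨯₃ v) • u = 0`. -/
theorem cross_eq_zero_of_dotProduct_eq_zero (hx : u ⬝ᵥ x = 0) (hv : u ⬝ᵥ v = 0)
    (hw : w ⬝ᵥ x ⨯₃ v = 0) (hu : u ⬝ᵥ w ≠ 0) : x ⨯₃ v = 0 := by
  have hpar : u ⨯₃ (x ⨯₃ v) = 0 := by
    rw [cross_cross_eq_smul_sub_smul', hv, dotProduct_comm, hx, zero_smul, zero_smul, sub_zero]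
  have key : (u ⬝ᵥ w) • (x ⨯₃ v) = 0 := by
    have := cross_cross_eq_smul_sub_smul u (x ⨯₃ v) w
    rwa [hpar, map_zero, LinearMap.zero_apply, dotProduct_comm (x ⨯₃ v), hw, zero_smul,
      sub_zero, eq_comm] at this
  exact (smul_eq_zero.1 key).resolve_left hu

theorem ne_zero_cases_of_dotProduct_eq_zero (hu : ∀ i, u i ≠ 0) (hv : v ≠ 0)
    (h : u ⬝ᵥ v = 0) :
    (v 0 ≠ 0 ∧ v 1 ≠ 0 ∧ v 2 ≠ 0) ∨ (v 2 = 0 ∧ v 0 ≠ 0 ∧ v 1 ≠ 0) ∨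
      (v 1 = 0 ∧ v 0 ≠ 0 ∧ v 2 ≠ 0) ∨ (v 0 = 0 ∧ v 1 ≠ 0 ∧ v 2 ≠ 0) := by
  rw [vec3_dotProduct] at h
  have hv' : ¬ (v 0 = 0 ∧ v 1 = 0 ∧ v 2 = 0) := fun h0 => hv (by ext i; fin_cases i <;> simp [h0])
  have := hu 0; have := hu 1; have := hu 2
  by_cases h0 : v 0 = 0 <;> by_cases h1 : v 1 = 0 <;> by_cases h2 : v 2 = 0 <;> simp_all

end CrossProduct

theorem lt_and_lt_of_add_eq_add {Γ : Type*} [AddCommMonoid Γ] [LinearOrder Γ]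
    [IsOrderedCancelAddMonoid Γ] {a b p q : Γ} (hp : a ≤ p) (hq : a ≤ q) (h : p + q = a + b)
    (hpa : p ≠ a) (hpb : p ≠ b) : p < b ∧ q < b := by
  have hqa : q ≠ a := by
    rintro rfl
    exact hpb (add_right_cancel (h.trans (add_comm _ _)))
  have hap : a < p := lt_of_le_of_ne hp (Ne.symm hpa)
  have haq : a < q := lt_of_le_of_ne hq (Ne.symm hqa)
  constructor
  · have := add_lt_add_of_le_of_lt (le_refl p) haq
    rw [h, add_comm a b] at this
    exact lt_of_add_lt_add_right this
  · have := add_lt_add_of_lt_of_le hap (le_refl q)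
    rw [h] at this
    exact lt_of_add_lt_add_left this

def expVec {K : Type*} [NatCast K] (n : Fin 3 →₀ ℕ) : Fin 3 → K := fun i => n i

namespace StronglyNonResonant

variable {α₁ α₂ α₃ : ℂ}

theorem ne_zero (h : StronglyNonResonant α₁ α₂ α₃) (i : Fin 3) : ![α₁, α₂, α₃] i ≠ 0 := by
  intro h0
  fin_cases i
  · exact one_ne_zero (h 1 0 0 (by simp_all)).1
  · exact one_ne_zero (h 0 1 0 (by simp_all)).2.1
  · exact one_ne_zero (h 0 0 1 (by simp_all)).2.2

theorem dotProduct_sub_ne_zero (h : StronglyNonResonant α₁ α₂ α₃) {m n : Fin 3 →₀ ℕ}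
    (hmn : m ≠ n) : ![α₁, α₂, α₃] ⬝ᵥ (expVec m - expVec n) ≠ 0 := by
  intro h0
  obtain ⟨h0, h1, h2⟩ := h (m 0 - n 0) (m 1 - n 1) (m 2 - n 2) (by
    rw [vec3_dotProduct] at h0
    simp only [Fin.isValue, cons_val_zero, cons_val_one, Matrix.cons_val, Pi.sub_apply,
      expVec] at h0
    push_cast
    linear_combination h0)
  refine hmn (Finsupp.ext fun i => ?_)
  fin_cases i <;> simp only [Fin.isValue, Fin.zero_eta, Fin.mk_one, Fin.reduceFinMk] <;> omega

end StronglyNonResonant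

section Induction

variable {K : Type*} [Field K] {α : Fin 3 → K} {t : (Fin 3 →₀ ℕ) → Fin 3 → K}

theorem exists_eq_smul_of_forall_lt_eq_zero
    (hres : ∀ m n : Fin 3 →₀ ℕ, m ≠ n → α ⬝ᵥ (expVec m - expVec n) ≠ 0)
    (htan : ∀ n, α ⬝ᵥ t n = 0)
    (hint : ∀ M, ∑ pq ∈ antidiagonal M, t pq.1 ⬝ᵥ expVec pq.2 ⨯₃ t pq.2 = 0)
    {n₀ : Fin 3 →₀ ℕ} (hn₀ : t n₀ ≠ 0) (hmin : ∀ m, toLex m < toLex n₀ → t m = 0)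
    (n : Fin 3 →₀ ℕ) : ∃ c : K, t n = c • t n₀ := by
  have hwf : WellFounded fun m n : Fin 3 →₀ ℕ => toLex m < toLex n :=
    InvImage.wf toLex wellFounded_lt
  induction n using hwf.induction with | h n ih =>
  by_cases hn : t n = 0
  · exact ⟨0, by rw [hn, zero_smul]⟩
  by_cases hnn₀ : n = n₀
  · exact ⟨1, by rw [hnn₀, one_smul]⟩
  have hle : ∀ m, t m ≠ 0 → toLex n₀ ≤ toLex m := fun m hm => not_lt.1 (mt (hmin m) hm)
  have hpair : {(n₀, n), (n, n₀)} ⊆ antidiagonal (n₀ + n) := by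
    simp [insert_subset_iff, add_comm]
  -- In the coefficient of `x ^ (n₀ + n)` every other pair of exponents lies below `n`, so its
  -- two vectors are parallel and its summand vanishes.
  have hrest : ∀ pq ∈ antidiagonal (n₀ + n), pq ∉ ({(n₀, n), (n, n₀)} : Finset _) →
      t pq.1 ⬝ᵥ expVec pq.2 ⨯₃ t pq.2 = 0 := by
    rintro ⟨p, q⟩ hpq hne
    simp only [HasAntidiagonal.mem_antidiagonal] at hpq
    simp only [mem_insert, mem_singleton, Prod.mk.injEq, not_or, not_and] at hne
    by_cases hp : t p = 0
    · rw [hp, zero_dotProduct]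
    by_cases hq : t q = 0
    · rw [hq, map_zero, dotProduct_zero]
    have hpn₀ : p ≠ n₀ := fun h => hne.1 h (by subst h; exact add_left_cancel hpq)
    have hpn : p ≠ n := fun h =>
      hne.2 h (by subst h; exact add_left_cancel (hpq.trans (add_comm _ _)))
    obtain ⟨hlt_p, hlt_q⟩ := lt_and_lt_of_add_eq_add (hle p hp) (hle q hq)
      (by simpa using congrArg toLex hpq) (by simpa using hpn₀) (by simpa using hpn)
    obtain ⟨c, hc⟩ := ih p hlt_p
    obtain ⟨d, hd⟩ := ih q hlt_q
    rw [hc, hd, map_smul, smul_dotProduct, dotProduct_smul, dot_cross_self, smul_zero, smul_zero]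
  have hsum := hint (n₀ + n)
  rw [← sum_subset hpair hrest, sum_pair fun h => hnn₀ (Prod.ext_iff.1 h).2] at hsum
  dsimp only at hsum
  have hcross : t n ⨯₃ t n₀ = 0 := by
    refine cross_eq_zero_of_dotProduct_eq_zero (htan n) (htan n₀) ?_ (hres n n₀ hnn₀)
    rw [triple_product_permutation (t n₀), triple_product_permutation (t n), ← cross_anticomm (t n),
      dotProduct_neg] at hsum
    rw [sub_dotProduct]
    linear_combination hsum
  exact exists_eq_smul_of_cross_eq_zero hn₀ hcross

theorem exists_ne_zero_forall_eq_smul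
    (hres : ∀ m n : Fin 3 →₀ ℕ, m ≠ n → α ⬝ᵥ (expVec m - expVec n) ≠ 0)
    (htan : ∀ n, α ⬝ᵥ t n = 0)
    (hint : ∀ M, ∑ pq ∈ antidiagonal M, t pq.1 ⬝ᵥ expVec pq.2 ⨯₃ t pq.2 = 0) (ht : t ≠ 0) :
    ∃ v ≠ 0, α ⬝ᵥ v = 0 ∧ ∀ n, ∃ c : K, t n = c • v := by
  obtain ⟨n₀, hn₀, hmin⟩ := (InvImage.wf toLex wellFounded_lt).has_min {n | t n ≠ 0}
    (Function.ne_iff.1 ht)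
  exact ⟨t n₀, hn₀, htan n₀, exists_eq_smul_of_forall_lt_eq_zero hres htan hint hn₀
    fun m hm => by_contra fun h => hmin m h hm⟩

end Induction

/-- Writing `∑ fᵢ dxᵢ = ∑ (xᵢfᵢ) dxᵢ/xᵢ`: the coefficients of `xⁿ` of its components in the
logarithmic frame. -/
noncomputable def logCoeff {K : Type*} [Field K] (f : Fin 3 → MvPowerSeries (Fin 3) K)
    (n : Fin 3 →₀ ℕ) : Fin 3 → K :=
  fun i => coeff n (X i * f i)

section Coefficients

variable {a b c : MvPowerSeries (Fin 3) ℂ}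

theorem dotProduct_logCoeff_eq_zero {α₁ α₂ α₃ : ℂ}
    (htan : C α₁ * X 0 * a + C α₂ * X 1 * b + C α₃ * X 2 * c = 0) (n : Fin 3 →₀ ℕ) :
    ![α₁, α₂, α₃] ⬝ᵥ logCoeff ![a, b, c] n = 0 := by
  have := congrArg (coeff n) htan
  rw [vec3_dotProduct]
  simpa [logCoeff, mul_assoc, coeff_C_mul] using this

theorem sum_logCoeff_dotProduct_cross_eq_zero
    (hint : a * (pd 1 c - pd 2 b) + b * (pd 2 a - pd 0 c) + c * (pd 0 b - pd 1 a) = 0)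
    (M : Fin 3 →₀ ℕ) :
    ∑ pq ∈ antidiagonal M,
      logCoeff ![a, b, c] pq.1 ⬝ᵥ expVec pq.2 ⨯₃ logCoeff ![a, b, c] pq.2 = 0 := by
  set E : Fin 3 → MvPowerSeries (Fin 3) ℂ → MvPowerSeries (Fin 3) ℂ :=
    fun i f => X i * pderiv ℂ i f
  -- Multiplied by `x₁x₂x₃`, integrability is written with the Euler operators `xᵢ∂ᵢ`.
  have hE : X 0 * a * (E 1 (X 2 * c) - E 2 (X 1 * b)) + X 1 * b * (E 2 (X 0 * a) - E 0 (X 2 * c))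
      + X 2 * c * (E 0 (X 1 * b) - E 1 (X 0 * a)) = 0 := by
    simp only [E, ne_eq, Fin.reduceEq, not_false_eq_true, pderiv_X_mul_of_ne]
    simp only [pd_eq_pderiv] at hint
    linear_combination X 0 * X 1 * X 2 * hint
  have := congrArg (coeff M) hE
  rw [map_add, map_add, coeff_mul, coeff_mul, coeff_mul, ← sum_add_distrib, ← sum_add_distrib,
    map_zero] at this
  rw [← this]
  refine sum_congr rfl fun pq _ => ?_
  simp only [E, map_sub, coeff_X_mul_pderiv, cross_apply, vec3_dotProduct, logCoeff, expVec,
    cons_val_zero, cons_val_one, Matrix.cons_val]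

end Coefficients

section NormalForm

variable {K : Type*} [Field K] {f : Fin 3 → MvPowerSeries (Fin 3) K} {v : Fin 3 → K}
  {U : MvPowerSeries (Fin 3) K}

theorem logCoeff_ne_zero (hf : f ≠ 0) : logCoeff f ≠ 0 := by
  obtain ⟨i, hi⟩ := Function.ne_iff.1 hf
  obtain ⟨n, hn⟩ := (ne_zero_iff_exists_coeff_ne_zero _).1 (mul_ne_zero (X_ne_zero i) hi)
  exact Function.ne_iff.2 ⟨n, Function.ne_iff.2 ⟨i, hn⟩⟩

theorem exists_X_mul_eq_C_mul_of_logCoeff_eq_smul (hpar : ∀ n, ∃ c : K, logCoeff f n = c • v) :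
    ∃ U : MvPowerSeries (Fin 3) K, ∀ i, X i * f i = C (v i) * U := by
  choose u hu using hpar
  let U : MvPowerSeries (Fin 3) K := u
  refine ⟨U, fun i => ext fun n => ?_⟩
  rw [coeff_C_mul]
  exact (congrFun (hu n) i).trans (mul_comm _ _)

theorem exists_isUnit_eq_X_mul_of_two_ne_zero {i j k : Fin 3} (hij : i ≠ j) (hi : v i ≠ 0)
    (hj : v j ≠ 0) (hk : v k = 0) (hU : ∀ l, X l * f l = C (v l) * U)
    (hcop : ∀ d, d ∣ f i → d ∣ f j → d ∣ f k → IsUnit d) :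
    ∃ G, IsUnit G ∧ f i = C (v i) * X j * G ∧ f j = C (v j) * X i * G ∧ f k = 0 := by
  obtain ⟨V, rfl⟩ := X_dvd_of_X_mul_eq_C_mul hi (hU i)
  obtain ⟨G, rfl⟩ := X_dvd_of_X_dvd_X_mul hij (X_dvd_of_X_mul_eq_C_mul hj (hU j))
  have hfi : f i = C (v i) * X j * G := mul_left_cancel₀ (X_ne_zero i) (by rw [hU i]; ring)
  have hfj : f j = C (v j) * X i * G := mul_left_cancel₀ (X_ne_zero j) (by rw [hU j]; ring)
  have hfk : f k = 0 := by simpa [hk, X_ne_zero] using hU k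
  exact ⟨G, hcop G ⟨_, hfi.trans (mul_comm _ _)⟩ ⟨_, hfj.trans (mul_comm _ _)⟩ (hfk ▸ dvd_zero G),
    hfi, hfj, hfk⟩

theorem exists_isUnit_eq_X_mul_X_mul_of_three_ne_zero {i j k : Fin 3}
    (hij : i ≠ j) (hik : i ≠ k) (hjk : j ≠ k)
    (hi : v i ≠ 0) (hj : v j ≠ 0) (hk : v k ≠ 0) (hU : ∀ l, X l * f l = C (v l) * U)
    (hcop : ∀ d, d ∣ f i → d ∣ f j → d ∣ f k → IsUnit d) :
    ∃ G, IsUnit G ∧ f i = C (v i) * (X j * X k) * G ∧ f j = C (v j) * (X i * X k) * G ∧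
      f k = C (v k) * (X i * X j) * G := by
  obtain ⟨V, rfl⟩ := X_dvd_of_X_mul_eq_C_mul hi (hU i)
  obtain ⟨W, rfl⟩ := X_dvd_of_X_dvd_X_mul hij (X_dvd_of_X_mul_eq_C_mul hj (hU j))
  obtain ⟨G, rfl⟩ :=
    X_dvd_of_X_dvd_X_mul hjk (X_dvd_of_X_dvd_X_mul hik (X_dvd_of_X_mul_eq_C_mul hk (hU k)))
  have hfi : f i = C (v i) * (X j * X k) * G :=
    mul_left_cancel₀ (X_ne_zero i) (by rw [hU i]; ring)
  have hfj : f j = C (v j) * (X i * X k) * G :=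
    mul_left_cancel₀ (X_ne_zero j) (by rw [hU j]; ring)
  have hfk : f k = C (v k) * (X i * X j) * G :=
    mul_left_cancel₀ (X_ne_zero k) (by rw [hU k]; ring)
  exact ⟨G, hcop G ⟨_, hfi.trans (mul_comm _ _)⟩ ⟨_, hfj.trans (mul_comm _ _)⟩
    ⟨_, hfk.trans (mul_comm _ _)⟩, hfi, hfj, hfk⟩

end NormalForm

theorem proposition_diagonal_normal_form (α₁ α₂ α₃ : ℂ)
    (hres : StronglyNonResonant α₁ α₂ α₃)
    (a b c : MvPowerSeries (Fin 3) ℂ)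
    (hcop : ∀ d : MvPowerSeries (Fin 3) ℂ, d ∣ a → d ∣ b → d ∣ c → IsUnit d)
    (htan : C (σ := Fin 3) (R := ℂ) α₁ * X 0 * a + C (σ := Fin 3) (R := ℂ) α₂ * X 1 * b
        + C (σ := Fin 3) (R := ℂ) α₃ * X 2 * c = 0)
    (hint : a * (pd 1 c - pd 2 b) + b * (pd 2 a - pd 0 c)
        + c * (pd 0 b - pd 1 a) = 0) :
    ∃ u : MvPowerSeries (Fin 3) ℂ, IsUnit u ∧
      ((∃ b₁ b₂ b₃ : ℂ, b₁ ≠ 0 ∧ b₂ ≠ 0 ∧ b₃ ≠ 0 ∧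
          a = C (σ := Fin 3) (R := ℂ) b₁ * (X 1 * X 2) * u ∧
          b = C (σ := Fin 3) (R := ℂ) b₂ * (X 0 * X 2) * u ∧
          c = C (σ := Fin 3) (R := ℂ) b₃ * (X 0 * X 1) * u) ∨
        (c = 0 ∧ ∃ b₁ b₂ : ℂ, b₁ ≠ 0 ∧ b₂ ≠ 0 ∧
          a = C (σ := Fin 3) (R := ℂ) b₁ * X 1 * u ∧ b = C (σ := Fin 3) (R := ℂ) b₂ * X 0 * u) ∨
        (b = 0 ∧ ∃ b₁ b₂ : ℂ, b₁ ≠ 0 ∧ b₂ ≠ 0 ∧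
          a = C (σ := Fin 3) (R := ℂ) b₁ * X 2 * u ∧ c = C (σ := Fin 3) (R := ℂ) b₂ * X 0 * u) ∨
        (a = 0 ∧ ∃ b₁ b₂ : ℂ, b₁ ≠ 0 ∧ b₂ ≠ 0 ∧
          b = C (σ := Fin 3) (R := ℂ) b₁ * X 2 * u ∧ c = C (σ := Fin 3) (R := ℂ) b₂ * X 1 * u)) := by
  have hf : ![a, b, c] ≠ 0 := fun h => not_isUnit_zero <| hcop 0
    (zero_dvd_iff.2 (congrFun h 0)) (zero_dvd_iff.2 (congrFun h 1)) (zero_dvd_iff.2 (congrFun h 2))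
  obtain ⟨v, hv, hαv, hpar⟩ := exists_ne_zero_forall_eq_smul
    (fun _ _ => hres.dotProduct_sub_ne_zero) (dotProduct_logCoeff_eq_zero htan)
    (sum_logCoeff_dotProduct_cross_eq_zero hint) (logCoeff_ne_zero hf)
  obtain ⟨U, hU⟩ := exists_X_mul_eq_C_mul_of_logCoeff_eq_smul hpar
  rcases ne_zero_cases_of_dotProduct_eq_zero hres.ne_zero hv hαv with
    ⟨h0, h1, h2⟩ | ⟨h2, h0, h1⟩ | ⟨h1, h0, h2⟩ | ⟨h0, h1, h2⟩
  · obtain ⟨G, hG, ha, hb, hc⟩ :=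
      exists_isUnit_eq_X_mul_X_mul_of_three_ne_zero (i := 0) (j := 1) (k := 2)
        (by decide) (by decide) (by decide) h0 h1 h2 hU hcop
    exact ⟨G, hG, Or.inl ⟨v 0, v 1, v 2, h0, h1, h2, ha, hb, hc⟩⟩
  · obtain ⟨G, hG, ha, hb, hc⟩ := exists_isUnit_eq_X_mul_of_two_ne_zero (i := 0) (j := 1) (k := 2)
      (by decide) h0 h1 h2 hU hcop
    exact ⟨G, hG, Or.inr (Or.inl ⟨hc, v 0, v 1, h0, h1, ha, hb⟩)⟩
  · obtain ⟨G, hG, ha, hc, hb⟩ := exists_isUnit_eq_X_mul_of_two_ne_zero (i := 0) (j := 2) (k := 1)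
      (by decide) h0 h2 h1 hU fun d ha hc hb => hcop d ha hb hc
    exact ⟨G, hG, Or.inr (Or.inr (Or.inl ⟨hb, v 0, v 2, h0, h2, ha, hc⟩))⟩
  · obtain ⟨G, hG, hb, hc, ha⟩ := exists_isUnit_eq_X_mul_of_two_ne_zero (i := 1) (j := 2) (k := 0)
      (by decide) h1 h2 h0 hU fun d hb hc ha => hcop d ha hb hc
    exact ⟨G, hG, Or.inr (Or.inr (Or.inr ⟨ha, v 1, v 2, h1, h2, hb, hc⟩))⟩
end

section
/- Let (α₁,α₂,α₃) ∈ ℂ³ be strongly non-resonant. Let a ∈ ℂ with a ≠ 0, and let f, g, h ∈ ℂ⟦t⟧ be formal power series with f of order at least two (its coefficients in degrees 0 and 1 vanish) and g, h with zero constant term. Suppose there exists Φ ∈ ℂ⟦t⟧ such that Φ·(a + f′) = α₁·(a·t + f), Φ·g′ = α₂·g and Φ·h′ = α₃·h, where ′ denotes the formal derivative (this is the condition that the parametrized formal curve γ(t) = (a·t + f(t), g(t), h(t)) is invariant by the diagonal vector field X = α₁x₁∂₁ + α₂x₂∂₂ + α₃x₃∂₃). Then g = 0 and h = 0; hence every smooth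 formal separatrix of X is one of the three coordinate axes. -/
/-!
Write `p = a·t + f`, so that all three equations have the form `Φ·u′ = β·u`. Comparing constant
terms for `u = p` gives `Φ(0) = 0`. If `Φ(0) = 0` and `u` has order `n`, the coefficient of `tⁿ`
in `Φ·u′` is `n·Φ₁·uₙ`, so `n·Φ₁ = β`. For `u = p` (order one) this gives `Φ₁ = α₁`, and then a
nonzero `g` (resp. `h`) of order `n` would give the resonance `n·α₁ - α₂ = 0` (resp. `n·α₁ - α₃ = 0`).
-/

open PowerSeries

namespace PowerSeries

variable {R : Type*} [CommSemiring R]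

theorem coeff_zero_mul_derivative (Φ u : R⟦X⟧) :
    coeff 0 (Φ * d⁄dX R u) = coeff 0 Φ * coeff 1 u := by
  simp [coeff_mul, coeff_derivative]

theorem coeff_mul_derivative_of_coeff_zero_eq_zero {Φ u : R⟦X⟧} (hΦ : coeff 0 Φ = 0) {n : ℕ}
    (hu : ∀ m < n, coeff m u = 0) :
    coeff n (Φ * d⁄dX R u) = n * coeff 1 Φ * coeff n u := by
  rw [coeff_mul]
  rcases n with _ | k
  · simp [hΦ]
  rw [Finset.sum_eq_single (1, k)]
  · rw [coeff_derivative]; push_cast; ring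
  · rintro ⟨_ | _ | i, j⟩ hij hne
    · simp [hΦ]
    · rw [Finset.HasAntidiagonal.mem_antidiagonal] at hij
      exact absurd (show j = k by omega) (fun hjk => hne (by rw [hjk]))
    · rw [Finset.HasAntidiagonal.mem_antidiagonal] at hij
      rw [coeff_derivative, hu (j + 1) (by omega), zero_mul, mul_zero]
  · simp [add_comm]

variable [IsCancelMulZero R]

theorem coeff_zero_eq_zero_of_mul_derivative_eq {Φ p : R⟦X⟧} {α : R}
    (hp₀ : coeff 0 p = 0) (hp₁ : coeff 1 p ≠ 0) (hΦ : Φ * d⁄dX R p = C α * p) :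
    coeff 0 Φ = 0 := by
  have h := congrArg (coeff 0) hΦ
  rw [coeff_zero_mul_derivative, coeff_C_mul, hp₀, mul_zero] at h
  exact (mul_eq_zero.mp h).resolve_right hp₁

theorem natCast_mul_coeff_one_eq_of_mul_derivative_eq {Φ u : R⟦X⟧} {β : R}
    (hΦ₀ : coeff 0 Φ = 0) (hΦ : Φ * d⁄dX R u = C β * u) {n : ℕ}
    (hu : ∀ m < n, coeff m u = 0) (hn : coeff n u ≠ 0) :
    n * coeff 1 Φ = β := by
  have h := congrArg (coeff n) hΦ
  rw [coeff_mul_derivative_of_coeff_zero_eq_zero hΦ₀ hu, coeff_C_mul] at h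
  exact mul_right_cancel₀ hn h

theorem exists_natCast_mul_coeff_one_eq_of_mul_derivative_eq {Φ u : R⟦X⟧} {β : R}
    (hΦ₀ : coeff 0 Φ = 0) (hΦ : Φ * d⁄dX R u = C β * u) (hu : u ≠ 0) :
    ∃ n : ℕ, n * coeff 1 Φ = β :=
  ⟨_, natCast_mul_coeff_one_eq_of_mul_derivative_eq hΦ₀ hΦ
    (fun m hm => coeff_of_lt_order_toNat m hm) (coeff_order hu)⟩

end PowerSeries

theorem StronglyNonResonant.natCast_mul_ne_second {α₁ α₂ α₃ : ℂ}
    (hres : StronglyNonResonant α₁ α₂ α₃) (n : ℕ) : n * α₁ ≠ α₂ := fun h =>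
  absurd (hres n (-1) 0 (by push_cast; linear_combination h)).2.1 (by norm_num)

theorem StronglyNonResonant.natCast_mul_ne_third {α₁ α₂ α₃ : ℂ}
    (hres : StronglyNonResonant α₁ α₂ α₃) (n : ℕ) : n * α₁ ≠ α₃ := fun h =>
  absurd (hres n 0 (-1) (by push_cast; linear_combination h)).2.2 (by norm_num)

theorem smooth_separatrix_is_coordinate_axis_general (α₁ α₂ α₃ : ℂ)
    (hres : StronglyNonResonant α₁ α₂ α₃)
    (a : ℂ) (ha : a ≠ 0) (f g h : PowerSeries ℂ)
    (hf0 : coeff 0 f = 0) (hf1 : coeff 1 f = 0)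
    (Φ : PowerSeries ℂ)
    (hinv1 : Φ * (C a + d⁄dX ℂ f) = C α₁ * (C a * X + f))
    (hinv2 : Φ * d⁄dX ℂ g = C α₂ * g)
    (hinv3 : Φ * d⁄dX ℂ h = C α₃ * h) :
    g = 0 ∧ h = 0 := by
  set p : PowerSeries ℂ := C a * X + f
  have hp : Φ * d⁄dX ℂ p = C α₁ * p := by simpa [p] using hinv1
  have hp₀ : coeff 0 p = 0 := by simpa [p] using hf0
  have hp₁ : coeff 1 p ≠ 0 := by simpa [p, hf1] using ha
  have hΦ₀ := coeff_zero_eq_zero_of_mul_derivative_eq hp₀ hp₁ hp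
  have hΦ₁ : coeff 1 Φ = α₁ := by
    simpa using natCast_mul_coeff_one_eq_of_mul_derivative_eq hΦ₀ hp
      (fun m hm => by rwa [Nat.lt_one_iff.mp hm]) hp₁
  constructor
  · by_contra hg
    obtain ⟨n, hn⟩ := exists_natCast_mul_coeff_one_eq_of_mul_derivative_eq hΦ₀ hinv2 hg
    exact hres.natCast_mul_ne_second n (hΦ₁ ▸ hn)
  · by_contra hh
    obtain ⟨n, hn⟩ := exists_natCast_mul_coeff_one_eq_of_mul_derivative_eq hΦ₀ hinv3 hh
    exact hres.natCast_mul_ne_third n (hΦ₁ ▸ hn)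

/-- A smooth formal separatrix `γ(t) = (a·t + f(t), g(t), h(t))` of the diagonal
vector field `X = α₁x₁∂₁ + α₂x₂∂₂ + α₃x₃∂₃` with strongly non-resonant eigenvalues
must be a coordinate axis: `g = 0` and `h = 0`. -/
theorem smooth_separatrix_is_coordinate_axis (α₁ α₂ α₃ : ℂ)
    (hres : StronglyNonResonant α₁ α₂ α₃)
    (a : ℂ) (ha : a ≠ 0) (f g h : PowerSeries ℂ)
    (hf0 : coeff 0 f = 0) (hf1 : coeff 1 f = 0)
    (hg0 : constantCoeff g = 0) (hh0 : constantCoeff h = 0)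
    (Φ : PowerSeries ℂ)
    (hinv1 : Φ * (C a + d⁄dX ℂ f) = C α₁ * (C a * X + f))
    (hinv2 : Φ * d⁄dX ℂ g = C α₂ * g)
    (hinv3 : Φ * d⁄dX ℂ h = C α₃ * h) :
    g = 0 ∧ h = 0 :=
  smooth_separatrix_is_coordinate_axis_general α₁ α₂ α₃ hres a ha f g h hf0 hf1 Φ hinv1 hinv2 hinv3
end

section
/- Let (α₁,α₂,α₃) ∈ ℂ³ be strongly non-resonant. Let g₁, g₂, g₃ ∈ ℂ⟦t⟧ each have zero constant term and satisfy αᵢ·gᵢ·gⱼ′ = αⱼ·gⱼ·gᵢ′ for all i, j ∈ {1,2,3}, where ′ denotes the formal derivative (this is the condition that the parametrized formal curve t ↦ (g₁(t), g₂(t), g₃(t)) is tangent to the diagonal vector field X = α₁x₁∂₁ + α₂x₂∂₂ + α₃x₃∂₃). Then at least two of g₁, g₂, g₃ are zero; hence every formal curve invariant by X is contained in one of the coordinate axes, i.e., the only formal separatrices of a strongly diagonalizable vector field are the coordinate axes in its diagonal form. -/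
open PowerSeries

/-! If `gᵢ` and `gⱼ` are nonzero of orders `mᵢ`, `mⱼ`, comparing the lowest coefficients
(in degree `mᵢ + mⱼ`) of `X · (αᵢ gᵢ gⱼ′ - αⱼ gⱼ gᵢ′) = 0` gives `αᵢ mⱼ = αⱼ mᵢ`, an integer
relation with `mᵢ, mⱼ > 0` that strong non-resonance forbids. -/

namespace PowerSeries

theorem coeff_add_mul_of_coeff_eq_zero {R : Type*} [Semiring R] {φ ψ : R⟦X⟧} {m n : ℕ}
    (hφ : ∀ i < m, coeff i φ = 0) (hψ : ∀ j < n, coeff j ψ = 0) :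
    coeff (m + n) (φ * ψ) = coeff m φ * coeff n ψ := by
  rw [coeff_mul, Finset.sum_eq_single_of_mem (m, n) (by simp)]
  intro ij hij hne
  rcases trichotomy_of_add_eq_add (Finset.HasAntidiagonal.mem_antidiagonal.mp hij) with h | h | h
  · exact absurd (Prod.ext h.1 h.2) hne
  · rw [hφ _ h, zero_mul]
  · rw [hψ _ h, mul_zero]

theorem coeff_X_mul_derivative {R : Type*} [CommSemiring R] (f : R⟦X⟧) (n : ℕ) :
    coeff n (X * d⁄dX R f) = coeff n f * n := by
  cases n with
  | zero => simp
  | succ n => rw [coeff_succ_X_mul, coeff_derivative, Nat.cast_succ]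

theorem toNat_order_mul_eq_of_mul_derivative_eq {R : Type*} [CommRing R] [NoZeroDivisors R]
    {a b : R} {f h : R⟦X⟧} (hf : f ≠ 0) (hh : h ≠ 0)
    (rel : C a * f * d⁄dX R h = C b * h * d⁄dX R f) :
    a * h.order.toNat = b * f.order.toNat := by
  set m := f.order.toNat
  set n := h.order.toNat
  have hEuler_low : ∀ {φ : R⟦X⟧} {k : ℕ}, (∀ i < k, coeff i φ = 0) → ∀ i < k,
      coeff i (X * d⁄dX R φ) = 0 := fun hφ i hi => by
    rw [coeff_X_mul_derivative, hφ i hi, zero_mul]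
  have hf_low := coeff_of_lt_order_toNat (φ := f)
  have hh_low := coeff_of_lt_order_toNat (φ := h)
  have key := congrArg (fun φ => coeff (m + n) (X * φ)) rel
  simp only [mul_left_comm X, mul_assoc, coeff_C_mul] at key
  rw [coeff_add_mul_of_coeff_eq_zero hf_low (hEuler_low hh_low), add_comm m,
    coeff_add_mul_of_coeff_eq_zero hh_low (hEuler_low hf_low), coeff_X_mul_derivative,
    coeff_X_mul_derivative] at key
  have hne : coeff m f * coeff n h ≠ 0 := mul_ne_zero (coeff_order hf) (coeff_order hh)
  exact mul_right_cancel₀ hne (by linear_combination key)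

theorem toNat_order_ne_zero {R : Type*} [Semiring R] {f : R⟦X⟧} (hf : f ≠ 0)
    (hf0 : constantCoeff f = 0) : f.order.toNat ≠ 0 := by
  rw [Ne, ENat.toNat_eq_zero, not_or]
  exact ⟨order_ne_zero_iff_constCoeff_eq_zero.mpr hf0, order_eq_top.not.mpr hf⟩

end PowerSeries

theorem StronglyNonResonant.eq_zero_of_sum_eq_zero {α : Fin 3 → ℂ}
    (hres : StronglyNonResonant (α 0) (α 1) (α 2)) {l : Fin 3 → ℤ}
    (hl : ∑ i, (l i : ℂ) * α i = 0) : l = 0 := by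
  obtain ⟨h0, h1, h2⟩ := hres _ _ _ (by simpa [Fin.sum_univ_three] using hl)
  ext i
  fin_cases i <;> assumption

theorem StronglyNonResonant.mul_natCast_ne {α : Fin 3 → ℂ}
    (hres : StronglyNonResonant (α 0) (α 1) (α 2)) {i j : Fin 3} (hij : i ≠ j) {m n : ℕ}
    (hn : n ≠ 0) : α i * n ≠ α j * m := by
  intro heq
  have := congrFun (hres.eq_zero_of_sum_eq_zero (l := Pi.single i n - Pi.single j m) ?_) i
  · simp [hij, hn] at this
  · simp only [Pi.sub_apply, Pi.single_apply, Int.cast_sub, Int.cast_ite, Int.cast_natCast,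
      Int.cast_zero, sub_mul, ite_mul, zero_mul, Finset.sum_sub_distrib, Finset.sum_ite_eq',
      Finset.mem_univ, if_true]
    linear_combination heq

/-- A formal curve `t ↦ (g₁(t), g₂(t), g₃(t))` tangent to the diagonal vector field
`X = α₁x₁∂₁ + α₂x₂∂₂ + α₃x₃∂₃` with strongly non-resonant eigenvalues is contained
in a coordinate axis: at least two of `g₁, g₂, g₃` vanish. -/
theorem separatrices_are_coordinate_axes (α : Fin 3 → ℂ)
    (hres : StronglyNonResonant (α 0) (α 1) (α 2))
    (g : Fin 3 → PowerSeries ℂ)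
    (hg0 : ∀ i, constantCoeff (g i) = 0)
    (htan : ∀ i j : Fin 3, C (α i) * g i * d⁄dX ℂ (g j)
        = C (α j) * g j * d⁄dX ℂ (g i)) :
    (g 0 = 0 ∧ g 1 = 0) ∨ (g 0 = 0 ∧ g 2 = 0) ∨ (g 1 = 0 ∧ g 2 = 0) := by
  have hpair : ∀ i j, i ≠ j → g i = 0 ∨ g j = 0 := by
    intro i j hij
    by_contra! hne
    exact hres.mul_natCast_ne hij (toNat_order_ne_zero hne.2 (hg0 j))
      (toNat_order_mul_eq_of_mul_derivative_eq hne.1 hne.2 (htan i j))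
  have := hpair 0 1 (by decide)
  have := hpair 0 2 (by decide)
  have := hpair 1 2 (by decide)
  tauto
end

section
/- Let (α₁,α₂,α₃) ∈ ℂ³ be strongly non-resonant. Let a ∈ R be nonzero, let λ ∈ ℂ, and let f ∈ R have zero constant term. Suppose X(a) = (λ + f)·a, where λ is identified with the constant power series. Then there exist natural numbers i, j, k and a unit u ∈ R such that a = x₁ⁱ·x₂ʲ·x₃ᵏ·u, and moreover λ = i·α₁ + j·α₂ + k·α₃. (In particular, the initial homogeneous part of a is a single monomial and divides a.) -/
/-!
Coefficientwise, `X` multiplies the coefficient of `x^m` by the weight `⟨m, α⟩`, so the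
eigen-equation reads `(⟨m, α⟩ - λ) a_m = (f a)_m`, and `(f a)_m` only involves coefficients `a_n`
with `n < m` because `f(0) = 0`. At a minimal exponent `m₀` of the support of `a` this forces
`λ = ⟨m₀, α⟩`. By well-founded induction every exponent `m` of the support dominates `m₀`: either
`(f a)_m ≠ 0` and `m` dominates a smaller support point, or `⟨m, α⟩ = λ = ⟨m₀, α⟩`, and strong
non-resonance says exactly that `m ↦ ⟨m, α⟩` is injective on `ℕ³`. Hence `x^m₀` divides `a`, with a
quotient whose constant coefficient is `a_m₀ ≠ 0`.
-/

open MvPowerSeries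

/-- The derivation `X(f) = α₁x₁∂₁f + α₂x₂∂₂f + α₃x₃∂₃f` on `ℂ⟦x₁,x₂,x₃⟧`. -/
noncomputable def Xder (α₁ α₂ α₃ : ℂ) (f : MvPowerSeries (Fin 3) ℂ) :
    MvPowerSeries (Fin 3) ℂ :=
  C (σ := Fin 3) (R := ℂ) α₁ * X 0 * pd 0 f + C (σ := Fin 3) (R := ℂ) α₂ * X 1 * pd 1 f
    + C (σ := Fin 3) (R := ℂ) α₃ * X 2 * pd 2 f

namespace MvPowerSeries

variable {σ R : Type*} [CommRing R]

theorem exists_lt_coeff_ne_zero_of_coeff_mul_ne_zero {f a : MvPowerSeries σ R}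
    (hf : constantCoeff f = 0) {m : σ →₀ ℕ} (h : coeff m (f * a) ≠ 0) :
    ∃ n < m, coeff n a ≠ 0 := by
  classical
  rw [coeff_mul] at h
  obtain ⟨p, hp, hne⟩ := Finset.exists_ne_zero_of_sum_ne_zero h
  rw [Finset.HasAntidiagonal.mem_antidiagonal] at hp
  have hp₁ : p.1 ≠ 0 := by
    rintro h₀
    apply left_ne_zero_of_mul hne
    rw [h₀, coeff_zero_eq_constantCoeff_apply, hf]
  refine ⟨p.2, ?_, right_ne_zero_of_mul hne⟩
  rw [← hp]
  exact lt_add_of_pos_left _ (pos_iff_ne_zero.2 hp₁)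

theorem exists_eq_monomial_mul_of_forall_le {a : MvPowerSeries σ R} {m₀ : σ →₀ ℕ}
    (h : ∀ m, coeff m a ≠ 0 → m₀ ≤ m) :
    ∃ u, constantCoeff u = coeff m₀ a ∧ a = monomial m₀ 1 * u := by
  let u : MvPowerSeries σ R := fun q => coeff (m₀ + q) a
  refine ⟨u, ?_, ?_⟩
  · rw [← coeff_zero_eq_constantCoeff_apply]
    exact congrArg (coeff · a) (add_zero m₀)
  · ext m
    rw [coeff_monomial_mul]
    split_ifs with hle
    · rw [one_mul]
      exact congrArg (coeff · a) (add_tsub_cancel_of_le hle).symm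
    · exact of_not_not (mt (h m) hle)

variable [NoZeroDivisors R]

theorem exists_coeff_ne_zero_and_eq_weight {a f : MvPowerSeries σ R} {w : (σ →₀ ℕ) → R}
    {lam : R} (hf : constantCoeff f = 0)
    (heig : ∀ m, (w m - lam) * coeff m a = coeff m (f * a)) (ha : a ≠ 0) :
    ∃ m₀, coeff m₀ a ≠ 0 ∧ lam = w m₀ := by
  have hsupp : {m | coeff m a ≠ 0}.Nonempty := (ne_zero_iff_exists_coeff_ne_zero a).1 ha
  obtain ⟨m₀, hm₀, hmin⟩ := wellFounded_lt.has_min _ hsupp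
  have hfa : coeff m₀ (f * a) = 0 := by
    by_contra hne
    obtain ⟨n, hn, hna⟩ := exists_lt_coeff_ne_zero_of_coeff_mul_ne_zero hf hne
    exact hmin n hna hn
  have := heig m₀
  rw [hfa, mul_eq_zero, sub_eq_zero] at this
  exact ⟨m₀, hm₀, (this.resolve_right hm₀).symm⟩

theorem le_of_coeff_ne_zero_of_eq_weight {a f : MvPowerSeries σ R} {w : (σ →₀ ℕ) → R}
    {lam : R} (hf : constantCoeff f = 0)
    (heig : ∀ m, (w m - lam) * coeff m a = coeff m (f * a)) (hw : Function.Injective w)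
    {m₀ : σ →₀ ℕ} (hlam : lam = w m₀) (m : σ →₀ ℕ) (hm : coeff m a ≠ 0) : m₀ ≤ m := by
  induction m using WellFoundedLT.induction with
  | _ m ih =>
    by_cases hfa : coeff m (f * a) = 0
    · have := heig m
      rw [hfa, mul_eq_zero, sub_eq_zero] at this
      exact (hw ((this.resolve_right hm).trans hlam)).ge
    · obtain ⟨n, hn, hna⟩ := exists_lt_coeff_ne_zero_of_coeff_mul_ne_zero hf hfa
      exact (ih n hn hna).trans hn.le

end MvPowerSeries

theorem coeff_pd {n : ℕ} (i : Fin n) (g : MvPowerSeries (Fin n) ℂ) (m : Fin n →₀ ℕ) :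
    coeff m (pd i g) = (m i + 1) * coeff (m + Finsupp.single i 1) g :=
  rfl

theorem coeff_X_mul_pd {n : ℕ} (i : Fin n) (g : MvPowerSeries (Fin n) ℂ) (m : Fin n →₀ ℕ) :
    coeff m (X i * pd i g) = (m i : ℂ) * coeff m g := by
  rw [X_def, coeff_monomial_mul]
  split_ifs with h
  · have h₁ : 1 ≤ m i := by simpa using Finsupp.single_le_iff.mp h
    rw [coeff_pd, tsub_add_cancel_of_le h, Finsupp.tsub_apply, Finsupp.single_eq_same,
      Nat.cast_sub h₁]
    ring
  · have : m i = 0 := by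
      by_contra h₀
      exact h (Finsupp.single_le_iff.mpr (Nat.one_le_iff_ne_zero.mpr h₀))
    simp [this]

theorem coeff_Xder (α₁ α₂ α₃ : ℂ) (g : MvPowerSeries (Fin 3) ℂ) (m : Fin 3 →₀ ℕ) :
    coeff m (Xder α₁ α₂ α₃ g) = (m 0 * α₁ + m 1 * α₂ + m 2 * α₃) * coeff m g := by
  simp only [Xder, mul_assoc, map_add, coeff_C_mul, coeff_X_mul_pd]
  ring

theorem StronglyNonResonant.injective_weight {α₁ α₂ α₃ : ℂ}
    (hres : StronglyNonResonant α₁ α₂ α₃) :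
    Function.Injective fun m : Fin 3 →₀ ℕ => (m 0 * α₁ + m 1 * α₂ + m 2 * α₃ : ℂ) := by
  intro m m' h
  obtain ⟨h₀, h₁, h₂⟩ :=
    hres (m 0 - m' 0) (m 1 - m' 1) (m 2 - m' 2) (by push_cast; linear_combination h)
  refine Finsupp.ext fun i => ?_
  fin_cases i <;> simp <;> omega

theorem X_pow_mul_X_pow_mul_X_pow_eq_monomial (m : Fin 3 →₀ ℕ) :
    (X 0 ^ m 0 * X 1 ^ m 1 * X 2 ^ m 2 : MvPowerSeries (Fin 3) ℂ) = monomial m 1 := by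
  rw [X_pow_eq, X_pow_eq, X_pow_eq, monomial_mul_monomial, monomial_mul_monomial, one_mul,
    one_mul]
  congr 2
  refine Finsupp.ext fun i => ?_
  fin_cases i <;> simp

theorem eigenfunction_is_monomial_times_unit (α₁ α₂ α₃ : ℂ)
    (hres : StronglyNonResonant α₁ α₂ α₃)
    (a : MvPowerSeries (Fin 3) ℂ) (ha : a ≠ 0) (lam : ℂ)
    (f : MvPowerSeries (Fin 3) ℂ) (hf : constantCoeff (σ := Fin 3) (R := ℂ) f = 0)
    (heig : Xder α₁ α₂ α₃ a = (C (σ := Fin 3) (R := ℂ) lam + f) * a) :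
    ∃ (i j k : ℕ) (u : MvPowerSeries (Fin 3) ℂ), IsUnit u ∧
      a = X 0 ^ i * X 1 ^ j * X 2 ^ k * u ∧
      lam = (i : ℂ) * α₁ + (j : ℂ) * α₂ + (k : ℂ) * α₃ := by
  have hcoeff : ∀ m : Fin 3 →₀ ℕ,
      ((m 0 * α₁ + m 1 * α₂ + m 2 * α₃ : ℂ) - lam) * coeff m a = coeff m (f * a) := fun m => by
    have h := congrArg (coeff m) heig
    rw [coeff_Xder, add_mul (C lam) f a, map_add, coeff_C_mul] at h
    linear_combination h
  obtain ⟨m₀, hm₀, hlam⟩ := exists_coeff_ne_zero_and_eq_weight hf hcoeff ha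
  obtain ⟨u, hu, ha_eq⟩ := exists_eq_monomial_mul_of_forall_le
    (le_of_coeff_ne_zero_of_eq_weight hf hcoeff hres.injective_weight hlam)
  refine ⟨m₀ 0, m₀ 1, m₀ 2, u, ?_, ?_, hlam⟩
  · rw [isUnit_iff_constantCoeff, hu]
    exact hm₀.isUnit
  · rw [X_pow_mul_X_pow_mul_X_pow_eq_monomial, ha_eq]
end
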